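/- Let a, b ∈ H² with Re(a) ≠ Re(b) and Im(a) ≠ Im(b), let d = ( Im(a·conj(b)) + sgn(Re(a−b))·|a−b|·√(Im(a)·Im(b)) ) / Im(a−b), and set p = i·( |a|² − |b|² − 2·(a−b)·d ) / (2·Im(a−b)). Then Re(p) = d and |p − a| = |p − b|. -/

import Mathlib

open Complex ComplexConjugate

/-! Writing `p = I * w / (2 Im(a - b))` with `w = |a|² - |b|² - 2 (a - b) d`, the real part of `p`
is `-Im w / (2 Im(a - b)) = d`, and its imaginary part is chosen so that `p` satisfies the equation
`2 ⟨p, a - b⟩ = |a|² - |b|²` of the perpendicular bisector of `[a, b]`. -/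

namespace Complex

theorem norm_sub_eq_norm_sub_iff (z a b : ℂ) :
    ‖z - a‖ = ‖z - b‖ ↔ 2 * (z.re * (a - b).re + z.im * (a - b).im) = ‖a‖ ^ 2 - ‖b‖ ^ 2 := by
  rw [← sq_eq_sq₀ (norm_nonneg _) (norm_nonneg _)]
  simp only [Complex.sq_norm, normSq_apply, sub_re, sub_im]
  constructor <;> intro h <;> linear_combination -h

theorem re_I_mul_div_ofReal (w : ℂ) (r : ℝ) : (I * w / r).re = -w.im / r := by
  simp [div_ofReal_re]

theorem im_I_mul_div_ofReal (w : ℂ) (r : ℝ) : (I * w / r).im = w.re / r := by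
  simp [div_ofReal_im]

end Complex

theorem p_on_bisector (a b : ℂ)
    (him : a.im ≠ b.im)
    (d : ℝ)
    (p : ℂ)
    (hp : p = Complex.I * (((‖a‖ ^ 2 : ℝ) : ℂ) - ((‖b‖ ^ 2 : ℝ) : ℂ)
        - 2 * (a - b) * (d : ℂ)) / (2 * (((a - b).im : ℝ) : ℂ))) :
    p.re = d ∧ ‖p - a‖ = ‖p - b‖ := by
  set w : ℂ := ((‖a‖ ^ 2 : ℝ) : ℂ) - ((‖b‖ ^ 2 : ℝ) : ℂ) - 2 * (a - b) * d
  have hm : (a - b).im ≠ 0 := sub_ne_zero.mpr him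
  have hp' : p = I * w / ((2 * (a - b).im : ℝ) : ℂ) := by rw [hp]; push_cast; rfl
  have hpre : p.re = d := by
    rw [hp', re_I_mul_div_ofReal]
    simp only [w, sub_im, ofReal_im, mul_im, re_ofNat, im_ofNat, ofReal_re]
    field_simp
    ring
  have hpim : p.im * (2 * (a - b).im) = ‖a‖ ^ 2 - ‖b‖ ^ 2 - 2 * (a - b).re * d := by
    rw [hp', im_I_mul_div_ofReal, div_mul_cancel₀ _ (mul_ne_zero two_ne_zero hm)]
    simp only [w, sub_re, ofReal_re, mul_re, re_ofNat, im_ofNat, ofReal_im]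
    ring
  refine ⟨hpre, (norm_sub_eq_norm_sub_iff p a b).mpr ?_⟩
  rw [hpre]
  linear_combination hpim
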